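/- Unisolvency of the 3D space U_K on the unit cube: if v ∈ U_K has vanishing first two moments of v·t on every edge and vanishing average of v∧n on every face, then v = 0. -/

import Mathlib

/-!
Each component of `v`, say the first, has the form `Q(y, z) + x L(y, z)` with `L` bilinear and
`Q` in the serendipity space `S₂` of the square. The two edge moments of the affine function
`s ↦ Q + s L` vanish only if `Q` and `L` vanish at that corner of the square, so `L = 0` and `Q`
vanishes at the four vertices. The face conditions on `v ∧ n` say that the first component has
mean zero over the faces `y = 0, 1` and `z = 0, 1`; since it no longer depends on `x`, these are
the means of `Q` over the four edges of the square. Vertex values and edge means are the degrees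
of freedom of the serendipity element, so `Q = 0`.
-/

/-- The space `U_K = P_{1,1,1}(ℝ³)³ +
span{y²z,yz²,y²,z²} × span{x²z,xz²,x²,z²} × span{x²y,xy²,x²,y²}`. -/
def UK : Set (ℝ → ℝ → ℝ → (Fin 3 → ℝ)) :=
  {u | ∃ b : Fin 3 → Fin 8 → ℝ, ∃ α1 α2 α3 α4 β1 β2 β3 β4 γ1 γ2 γ3 γ4 : ℝ, ∀ x y z : ℝ,
    u x y z =
      ![b 0 0 + b 0 1 * x + b 0 2 * y + b 0 3 * z + b 0 4 * x * y + b 0 5 * x * z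
          + b 0 6 * y * z + b 0 7 * x * y * z
          + α1 * y ^ 2 * z + α2 * y * z ^ 2 + α3 * y ^ 2 + α4 * z ^ 2,
        b 1 0 + b 1 1 * x + b 1 2 * y + b 1 3 * z + b 1 4 * x * y + b 1 5 * x * z
          + b 1 6 * y * z + b 1 7 * x * y * z
          + β1 * x ^ 2 * z + β2 * x * z ^ 2 + β3 * x ^ 2 + β4 * z ^ 2,
        b 2 0 + b 2 1 * x + b 2 2 * y + b 2 3 * z + b 2 4 * x * y + b 2 5 * x * z
          + b 2 6 * y * z + b 2 7 * x * y * z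
          + γ1 * x ^ 2 * y + γ2 * x * y ^ 2 + γ3 * x ^ 2 + γ4 * y ^ 2]}

/-- cross product of vectors in `ℝ³` -/
def cross (u w : Fin 3 → ℝ) : Fin 3 → ℝ :=
  ![u 1 * w 2 - u 2 * w 1, u 2 * w 0 - u 0 * w 2, u 0 * w 1 - u 1 * w 0]

theorem integral_zero_one_of_eq_quadratic {q : ℝ → ℝ} (a b c : ℝ)
    (hq : ∀ t, q t = a + b * t + c * t ^ 2) : ∫ t in (0:ℝ)..1, q t = a + b / 2 + c / 3 := by
  have hint {f : ℝ → ℝ} (hf : Continuous f) : IntervalIntegrable f MeasureTheory.volume 0 1 :=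
    hf.intervalIntegrable 0 1
  simp_rw [hq]
  rw [intervalIntegral.integral_add (hint (by fun_prop)) (hint (by fun_prop)),
    intervalIntegral.integral_add (hint (by fun_prop)) (hint (by fun_prop)),
    intervalIntegral.integral_const_mul, intervalIntegral.integral_const_mul]
  norm_num
  ring

theorem affine_coeffs_eq_zero_of_moments {a b : ℝ} (h₀ : ∫ s in (0:ℝ)..1, (a + s * b) = 0)
    (h₁ : ∫ s in (0:ℝ)..1, s * (a + s * b) = 0) : a = 0 ∧ b = 0 := by
  rw [integral_zero_one_of_eq_quadratic a b 0 fun s => by ring] at h₀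
  rw [integral_zero_one_of_eq_quadratic 0 a b fun s => by ring] at h₁
  constructor <;> linarith

theorem intervalIntegral_swap_of_continuous {F : ℝ → ℝ → ℝ}
    (hF : Continuous fun p : ℝ × ℝ => F p.1 p.2) (a b c d : ℝ) :
    ∫ x in a..b, ∫ y in c..d, F x y = ∫ y in c..d, ∫ x in a..b, F x y :=
  MeasureTheory.intervalIntegral_intervalIntegral_swap <|
    (hF.continuousOn.integrableOn_compact (isCompact_uIcc.prod isCompact_uIcc)).mono_set
      (Set.prod_mono Set.uIoc_subset_uIcc Set.uIoc_subset_uIcc)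

namespace UnitSquare

def bilinear (l : Fin 4 → ℝ) (y z : ℝ) : ℝ :=
  l 0 + l 1 * y + l 2 * z + l 3 * y * z

/-- The element of the serendipity space `S₂` of the square with coefficients `p`. -/
def serendipity (p : Fin 8 → ℝ) (y z : ℝ) : ℝ :=
  p 0 + p 1 * y + p 2 * z + p 3 * y * z + p 4 * y ^ 2 * z + p 5 * y * z ^ 2 + p 6 * y ^ 2
    + p 7 * z ^ 2

theorem eq_zero_of_bilinear_vertices {l : Fin 4 → ℝ}
    (hvert : ∀ y z : ℝ, (y = 0 ∨ y = 1) → (z = 0 ∨ z = 1) → bilinear l y z = 0) : l = 0 := by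
  have h₀₀ := hvert 0 0 (.inl rfl) (.inl rfl)
  have h₀₁ := hvert 0 1 (.inl rfl) (.inr rfl)
  have h₁₀ := hvert 1 0 (.inr rfl) (.inl rfl)
  have h₁₁ := hvert 1 1 (.inr rfl) (.inr rfl)
  simp only [bilinear] at h₀₀ h₀₁ h₁₀ h₁₁
  funext i
  fin_cases i <;>
    simp only [Fin.isValue, Fin.zero_eta, Fin.mk_one, Fin.reduceFinMk, Pi.zero_apply] <;>
    linarith

theorem integral_serendipity_snd (p : Fin 8 → ℝ) (y : ℝ) :
    ∫ t in (0:ℝ)..1, serendipity p y t =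
      (p 0 + p 1 * y + p 6 * y ^ 2) + (p 2 + p 3 * y + p 4 * y ^ 2) / 2 + (p 5 * y + p 7) / 3 :=
  integral_zero_one_of_eq_quadratic _ _ _ fun t => by unfold serendipity; ring

theorem integral_serendipity_fst (p : Fin 8 → ℝ) (z : ℝ) :
    ∫ t in (0:ℝ)..1, serendipity p t z =
      (p 0 + p 2 * z + p 7 * z ^ 2) + (p 1 + p 3 * z + p 5 * z ^ 2) / 2 + (p 4 * z + p 6) / 3 :=
  integral_zero_one_of_eq_quadratic _ _ _ fun t => by unfold serendipity; ring

theorem eq_zero_of_serendipity_vertices_edges {p : Fin 8 → ℝ}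
    (hvert : ∀ y z : ℝ, (y = 0 ∨ y = 1) → (z = 0 ∨ z = 1) → serendipity p y z = 0)
    (hedge_y : ∀ y : ℝ, (y = 0 ∨ y = 1) → ∫ t in (0:ℝ)..1, serendipity p y t = 0)
    (hedge_z : ∀ z : ℝ, (z = 0 ∨ z = 1) → ∫ t in (0:ℝ)..1, serendipity p t z = 0) : p = 0 := by
  have h₀₀ := hvert 0 0 (.inl rfl) (.inl rfl)
  have h₀₁ := hvert 0 1 (.inl rfl) (.inr rfl)
  have h₁₀ := hvert 1 0 (.inr rfl) (.inl rfl)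
  have h₁₁ := hvert 1 1 (.inr rfl) (.inr rfl)
  have hy₀ := hedge_y 0 (.inl rfl)
  have hy₁ := hedge_y 1 (.inr rfl)
  have hz₀ := hedge_z 0 (.inl rfl)
  have hz₁ := hedge_z 1 (.inr rfl)
  simp only [serendipity] at h₀₀ h₀₁ h₁₀ h₁₁
  rw [integral_serendipity_snd] at hy₀ hy₁
  rw [integral_serendipity_fst] at hz₀ hz₁
  funext i
  fin_cases i <;>
    simp only [Fin.isValue, Fin.zero_eta, Fin.mk_one, Fin.reduceFinMk, Pi.zero_apply] <;>
    linarith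

end UnitSquare

open UnitSquare

theorem eq_zero_of_edge_moments_of_face_means {f : ℝ → ℝ → ℝ → ℝ} {p : Fin 8 → ℝ}
    {l : Fin 4 → ℝ} (hf : ∀ s y z, f s y z = serendipity p y z + s * bilinear l y z)
    (hedge : ∀ y z : ℝ, (y = 0 ∨ y = 1) → (z = 0 ∨ z = 1) →
      (∫ s in (0:ℝ)..1, f s y z) = 0 ∧ (∫ s in (0:ℝ)..1, s * f s y z) = 0)
    (hface_y : ∀ y : ℝ, (y = 0 ∨ y = 1) → ∫ s in (0:ℝ)..1, ∫ t in (0:ℝ)..1, f s y t = 0)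
    (hface_z : ∀ z : ℝ, (z = 0 ∨ z = 1) → ∫ s in (0:ℝ)..1, ∫ t in (0:ℝ)..1, f s t z = 0) :
    ∀ s y z, f s y z = 0 := by
  simp_rw [hf] at hedge hface_y hface_z
  have hvert y z (hy : y = 0 ∨ y = 1) (hz : z = 0 ∨ z = 1) :
      serendipity p y z = 0 ∧ bilinear l y z = 0 :=
    affine_coeffs_eq_zero_of_moments (hedge y z hy hz).1 (hedge y z hy hz).2
  have hl : l = 0 := eq_zero_of_bilinear_vertices fun y z hy hz => (hvert y z hy hz).2
  simp only [hl, bilinear, Pi.zero_apply, zero_mul, add_zero, mul_zero,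
    intervalIntegral.integral_const, sub_zero, one_smul] at hface_y hface_z
  have hp : p = 0 :=
    eq_zero_of_serendipity_vertices_edges (fun y z hy hz => (hvert y z hy hz).1) hface_y hface_z
  intro s y z
  simp [hf, hp, hl, serendipity, bilinear]

theorem exists_serendipity_bilinear_of_mem_UK {v : ℝ → ℝ → ℝ → (Fin 3 → ℝ)} (hv : v ∈ UK) :
    ∃ (p₀ p₁ p₂ : Fin 8 → ℝ) (l₀ l₁ l₂ : Fin 4 → ℝ),
      (∀ x y z, v x y z 0 = serendipity p₀ y z + x * bilinear l₀ y z) ∧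
      (∀ x y z, v x y z 1 = serendipity p₁ x z + y * bilinear l₁ x z) ∧
      (∀ x y z, v x y z 2 = serendipity p₂ x y + z * bilinear l₂ x y) := by
  obtain ⟨b, α₁, α₂, α₃, α₄, β₁, β₂, β₃, β₄, γ₁, γ₂, γ₃, γ₄, hb⟩ := hv
  refine ⟨![b 0 0, b 0 2, b 0 3, b 0 6, α₁, α₂, α₃, α₄], ![b 1 0, b 1 1, b 1 3, b 1 5, β₁, β₂, β₃, β₄],
    ![b 2 0, b 2 1, b 2 2, b 2 4, γ₁, γ₂, γ₃, γ₄], ![b 0 1, b 0 4, b 0 5, b 0 7],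
    ![b 1 2, b 1 4, b 1 6, b 1 7], ![b 2 3, b 2 5, b 2 6, b 2 7],
    fun x y z => ?_, fun x y z => ?_, fun x y z => ?_⟩ <;>
  simp only [hb, serendipity, bilinear, Fin.isValue, Matrix.cons_val_zero, Matrix.cons_val_one,
    Matrix.cons_val] <;>
  ring
/-- Unisolvency of `U_K` on the unit cube `K = [0,1]³`: if `v ∈ U_K` has
vanishing first two moments `∫_e (v·t) sⁱ ds`, `i = 0,1`, on each of the 12
edges (with tangent `t`) and vanishing average `∫_f v∧n` on each of the 6
faces (with outward normal `n`), then `v = 0`. For the face `x = x0`,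
`x0 ∈ {0,1}`, the outward normal is `(2x0−1, 0, 0)`, and similarly for the
other faces. -/
theorem stmt_14 (v : ℝ → ℝ → ℝ → (Fin 3 → ℝ)) (hv : v ∈ UK)
    -- edge moments: edges parallel to the x-axis (tangent e₁)
    (hex : ∀ y0 z0 : ℝ, (y0 = 0 ∨ y0 = 1) → (z0 = 0 ∨ z0 = 1) →
      (∫ s in (0:ℝ)..1, v s y0 z0 0) = 0 ∧ (∫ s in (0:ℝ)..1, s * v s y0 z0 0) = 0)
    -- edges parallel to the y-axis (tangent e₂)
    (hey : ∀ x0 z0 : ℝ, (x0 = 0 ∨ x0 = 1) → (z0 = 0 ∨ z0 = 1) →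
      (∫ s in (0:ℝ)..1, v x0 s z0 1) = 0 ∧ (∫ s in (0:ℝ)..1, s * v x0 s z0 1) = 0)
    -- edges parallel to the z-axis (tangent e₃)
    (hez : ∀ x0 y0 : ℝ, (x0 = 0 ∨ x0 = 1) → (y0 = 0 ∨ y0 = 1) →
      (∫ s in (0:ℝ)..1, v x0 y0 s 2) = 0 ∧ (∫ s in (0:ℝ)..1, s * v x0 y0 s 2) = 0)
    -- face averages of v ∧ n
    (hfx : ∀ x0 : ℝ, (x0 = 0 ∨ x0 = 1) → ∀ i : Fin 3,
      (∫ s in (0:ℝ)..1, ∫ t in (0:ℝ)..1, cross (v x0 s t) ![2 * x0 - 1, 0, 0] i) = 0)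
    (hfy : ∀ y0 : ℝ, (y0 = 0 ∨ y0 = 1) → ∀ i : Fin 3,
      (∫ s in (0:ℝ)..1, ∫ t in (0:ℝ)..1, cross (v s y0 t) ![0, 2 * y0 - 1, 0] i) = 0)
    (hfz : ∀ z0 : ℝ, (z0 = 0 ∨ z0 = 1) → ∀ i : Fin 3,
      (∫ s in (0:ℝ)..1, ∫ t in (0:ℝ)..1, cross (v s t z0) ![0, 0, 2 * z0 - 1] i) = 0) :
    ∀ x y z : ℝ, v x y z = 0 := by
  obtain ⟨p₀, p₁, p₂, l₀, l₁, l₂, hv₀, hv₁, hv₂⟩ := exists_serendipity_bilinear_of_mem_UK hv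
  have hn (a : ℝ) (ha : a = 0 ∨ a = 1) : 2 * a - 1 ≠ 0 := by rcases ha with rfl | rfl <;> norm_num
  have h₀ := eq_zero_of_edge_moments_of_face_means hv₀ hex
    (fun y hy => by simpa [cross, hn y hy] using hfy y hy 2)
    (fun z hz => by simpa [cross, hn z hz] using hfz z hz 1)
  have h₁ := eq_zero_of_edge_moments_of_face_means (f := fun s x z => v x s z 1)
    (fun s x z => hv₁ x s z) hey
    (fun x hx => by simpa [cross, hn x hx] using hfx x hx 2)
    (fun z hz => by
      rw [intervalIntegral_swap_of_continuous (F := fun s t => v t s z 1)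
        (by simp only [hv₁, serendipity, bilinear]; fun_prop)]
      simpa [cross, hn z hz] using hfz z hz 0)
  have h₂ := eq_zero_of_edge_moments_of_face_means (f := fun s x y => v x y s 2)
    (fun s x y => hv₂ x y s) hez
    (fun x hx => by
      rw [intervalIntegral_swap_of_continuous (F := fun s t => v x t s 2)
        (by simp only [hv₂, serendipity, bilinear]; fun_prop)]
      simpa [cross, hn x hx] using hfx x hx 1)
    (fun y hy => by
      rw [intervalIntegral_swap_of_continuous (F := fun s t => v t y s 2)
        (by simp only [hv₂, serendipity, bilinear]; fun_prop)]
      simpa [cross, hn y hy] using hfy y hy 0)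
  intro x y z
  funext i
  fin_cases i
  exacts [h₀ x y z, h₁ y x z, h₂ z x y]
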